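/- arXiv:0806.2789 — 2 statements merged into one kernel-verified Lean document; each statement's English description precedes it below -/
import Mathlib

section
/- Triple quad formula (green): for points A1, A2, A3 in the plane over a field of characteristic not 2, if the three points are collinear then (Q1+Q2+Q3)² = 2(Q1²+Q2²+Q3²), where Qi are the green quadrances Q1 = Q_g(A2,A3), Q2 = Q_g(A1,A3), Q3 = Q_g(A1,A2). -/
/-! Writing `Q1, Q2, Q3` for the green quadrances of the triangle and `[A1 A2 A3]` for the
cross product of `A2 - A1` and `A3 - A1`, one has the polynomial identity
`(Q1 + Q2 + Q3)² - 2 (Q1² + Q2² + Q3²) = -4 [A1 A2 A3]²`, and the cross product vanishes for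
collinear points. -/

/-- Green quadrance between two points. -/
def Qg {F : Type*} [Field F] (X Y : F × F) : F :=
  2 * (Y.1 - X.1) * (Y.2 - X.2)

/-- Three points are collinear when the vectors `A2 - A1` and `A3 - A1`
are linearly dependent. -/
def Collinear3 {F : Type*} [Field F] (A1 A2 A3 : F × F) : Prop :=
  ∃ s t : F, (s, t) ≠ (0, 0) ∧
    s • (A2.1 - A1.1, A2.2 - A1.2) + t • (A3.1 - A1.1, A3.2 - A1.2) = (0, 0)

/-- Wildberger's Archimedes function. -/
def archimedes {R : Type*} [CommRing R] (a b c : R) : R :=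
  (a + b + c) ^ 2 - 2 * (a ^ 2 + b ^ 2 + c ^ 2)

def cross3 {F : Type*} [Field F] (A1 A2 A3 : F × F) : F :=
  (A2.1 - A1.1) * (A3.2 - A1.2) - (A3.1 - A1.1) * (A2.2 - A1.2)

theorem mul_sub_mul_eq_zero_of_lin_dep {R : Type*} [CommRing R] [NoZeroDivisors R]
    {a b c d s t : R} (hst : (s, t) ≠ (0, 0)) (h1 : s * a + t * c = 0)
    (h2 : s * b + t * d = 0) : a * d - c * b = 0 := by
  have hs : s * (a * d - c * b) = 0 := by linear_combination d * h1 - c * h2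
  have ht : t * (a * d - c * b) = 0 := by linear_combination a * h2 - b * h1
  by_contra hdet
  exact hst (Prod.ext (eq_zero_of_ne_zero_of_mul_right_eq_zero hdet hs)
    (eq_zero_of_ne_zero_of_mul_right_eq_zero hdet ht))

theorem Collinear3.cross3_eq_zero {F : Type*} [Field F] {A1 A2 A3 : F × F}
    (h : Collinear3 A1 A2 A3) : cross3 A1 A2 A3 = 0 := by
  obtain ⟨s, t, hst, hrel⟩ := h
  exact mul_sub_mul_eq_zero_of_lin_dep hst (congrArg Prod.fst hrel)
    (congrArg Prod.snd hrel)

theorem archimedes_Qg {F : Type*} [Field F] (A1 A2 A3 : F × F) :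
    archimedes (Qg A2 A3) (Qg A1 A3) (Qg A1 A2) = -4 * cross3 A1 A2 A3 ^ 2 := by
  simp only [archimedes, Qg, cross3]
  ring

theorem green_triple_quad_general {F : Type*} [Field F]
    (A1 A2 A3 : F × F) (h : Collinear3 A1 A2 A3) :
    (Qg A2 A3 + Qg A1 A3 + Qg A1 A2) ^ 2
      = 2 * ((Qg A2 A3) ^ 2 + (Qg A1 A3) ^ 2 + (Qg A1 A2) ^ 2) := by
  have h0 : archimedes (Qg A2 A3) (Qg A1 A3) (Qg A1 A2) = 0 := by
    rw [archimedes_Qg, h.cross3_eq_zero]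
    ring
  exact sub_eq_zero.mp h0

/-- Triple quad formula (green): collinearity implies
`(Q1+Q2+Q3)² = 2(Q1²+Q2²+Q3²)` for green quadrances. -/
theorem green_triple_quad {F : Type*} [Field F] (hchar : (2 : F) ≠ 0)
    (A1 A2 A3 : F × F) (h : Collinear3 A1 A2 A3) :
    (Qg A2 A3 + Qg A1 A3 + Qg A1 A2) ^ 2
      = 2 * ((Qg A2 A3) ^ 2 + (Qg A1 A3) ^ 2 + (Qg A1 A2) ^ 2) :=
  green_triple_quad_general A1 A2 A3 h
end

section
/- Cross law (blue): for a triangle A1A2A3 with blue quadrances Q1, Q2, Q3 (Qi opposite Ai), Q3 nonzero denominators as needed, and s3 the blue spread at A3: (Q1+Q2−Q3)² = 4Q1Q2(1−s3). -/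
/-- Blue quadrance between two points. -/
def Qb {F : Type*} [Field F] (X Y : F × F) : F :=
  (Y.1 - X.1) ^ 2 + (Y.2 - X.2) ^ 2

/-- Blue spread between lines with direction vectors `u` and `v`. -/
def blueSpread {F : Type*} [Field F] (u v : F × F) : F :=
  (u.1 * v.2 - u.2 * v.1) ^ 2 / ((u.1 ^ 2 + u.2 ^ 2) * (v.1 ^ 2 + v.2 ^ 2))

/-!
With `u = A1 - A3` and `v = A2 - A3`, polarization gives `Q1 + Q2 - Q3 = 2 u·v`, while Lagrange's
identity `(u·v)² + (u×v)² = |u|² |v|²` gives `1 - s3 = (u·v)² / (Q2 Q1)`. Squaring the first and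
multiplying out the second yields the cross law.
-/

section BlueGeometry

variable {F : Type*} [Field F]

def blueDot (u v : F × F) : F :=
  u.1 * v.1 + u.2 * v.2

theorem blueDot_self (u : F × F) : blueDot u u = u.1 ^ 2 + u.2 ^ 2 := by
  simp only [blueDot]
  ring

theorem blueDot_sq_add_cross_sq (u v : F × F) :
    blueDot u v ^ 2 + (u.1 * v.2 - u.2 * v.1) ^ 2 = blueDot u u * blueDot v v := by
  simp only [blueDot]
  ring

theorem one_sub_blueSpread {u v : F × F} (hu : blueDot u u ≠ 0) (hv : blueDot v v ≠ 0) :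
    1 - blueSpread u v = blueDot u v ^ 2 / (blueDot u u * blueDot v v) := by
  have hLagrange := blueDot_sq_add_cross_sq u v
  rw [blueSpread, ← blueDot_self, ← blueDot_self, eq_div_iff (mul_ne_zero hu hv), sub_mul,
    one_mul, div_mul_cancel₀ _ (mul_ne_zero hu hv)]
  linear_combination -hLagrange

theorem Qb_eq_blueDot (X Y : F × F) :
    Qb X Y = blueDot (X.1 - Y.1, X.2 - Y.2) (X.1 - Y.1, X.2 - Y.2) := by
  simp only [Qb, blueDot]
  ring

theorem Qb_add_Qb_sub_Qb (A1 A2 A3 : F × F) :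
    Qb A2 A3 + Qb A1 A3 - Qb A1 A2
      = 2 * blueDot (A1.1 - A3.1, A1.2 - A3.2) (A2.1 - A3.1, A2.2 - A3.2) := by
  simp only [Qb, blueDot]
  ring

end BlueGeometry

/-- Cross law (blue): `(Q1+Q2-Q3)² = 4Q1Q2(1-s3)`. -/
theorem blue_cross_law {F : Type*} [Field F] (A1 A2 A3 : F × F)
    (hQ1 : Qb A2 A3 ≠ 0) (hQ2 : Qb A1 A3 ≠ 0) :
    (Qb A2 A3 + Qb A1 A3 - Qb A1 A2) ^ 2
      = 4 * Qb A2 A3 * Qb A1 A3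
          * (1 - blueSpread (A1.1 - A3.1, A1.2 - A3.2) (A2.1 - A3.1, A2.2 - A3.2)) := by
  rw [Qb_add_Qb_sub_Qb, Qb_eq_blueDot A2 A3, Qb_eq_blueDot A1 A3] at *
  set u : F × F := (A1.1 - A3.1, A1.2 - A3.2)
  set v : F × F := (A2.1 - A3.1, A2.2 - A3.2)
  rw [one_sub_blueSpread hQ2 hQ1]
  field_simp
  ring
end
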